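/- arXiv:2101.02669 — 7 statements merged into one kernel-verified Lean document; each statement's English description precedes it below -/
import Mathlib

section
/- Let Z ⊆ ℝᵈ be convex and compact with 0 ∈ Z, and let g(x,·) : Z → ℝ be concave and continuous for each x. Define g̃(x, (z̃, λ)) = λ·g(x, z̃/λ) for λ > 0 with z̃ ∈ λZ, and g̃(x, (0,0)) = 0. Then g̃(x,·) is continuous on the cone U = {(z̃, λ) : λ ≥ 0, z̃ ∈ λZ}; in particular g̃(x, u) → 0 as u → (0,0) within U. -/
open scoped Pointwise
open Filter Topology

/-!
On the part `λ > 0` of the cone, `g̃(z̃, λ) = λ · g(λ⁻¹ • z̃)` is a composition of continuous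
maps. At the apex, `|g̃(z̃, λ)| ≤ M λ` with `M` a bound of `|g|` on the compact set `Z`, and the
apex is the only point of the cone with `λ = 0`.
-/

namespace Perspective

variable {E : Type*} [AddCommGroup E] [Module ℝ E]

def cone (Z : Set E) : Set (E × ℝ) := {p | 0 ≤ p.2 ∧ p.1 ∈ p.2 • Z}

noncomputable def perspective (f : E → ℝ) (p : E × ℝ) : ℝ :=
  if 0 < p.2 then p.2 * f (p.2⁻¹ • p.1) else 0

variable {Z : Set E} {f : E → ℝ} {p : E × ℝ}

theorem inv_smul_mem_of_mem_cone (hp : p ∈ cone Z) (hpos : 0 < p.2) : p.2⁻¹ • p.1 ∈ Z :=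
  (Set.mem_smul_set_iff_inv_smul_mem₀ hpos.ne' Z p.1).1 hp.2

theorem eq_zero_of_mem_cone_of_snd_eq_zero (hp : p ∈ cone Z) (h0 : p.2 = 0) : p = 0 := by
  have hp1 : p.1 ∈ (0 : ℝ) • Z := h0 ▸ hp.2
  exact Prod.ext (Set.zero_smul_set_subset Z hp1) h0

theorem norm_perspective_le {M : ℝ} (hM : ∀ z ∈ Z, ‖f z‖ ≤ M) (hp : p ∈ cone Z) :
    ‖perspective f p‖ ≤ M * p.2 := by
  unfold perspective
  split_ifs with hpos
  · rw [norm_mul, Real.norm_of_nonneg hpos.le, mul_comm]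
    exact mul_le_mul_of_nonneg_right (hM _ (inv_smul_mem_of_mem_cone hp hpos)) hpos.le
  · rw [le_antisymm (not_lt.1 hpos) hp.1, norm_zero, mul_zero]

variable [TopologicalSpace E]

theorem tendsto_perspective_zero {M : ℝ} (hM : ∀ z ∈ Z, ‖f z‖ ≤ M) :
    Tendsto (perspective f) (𝓝[cone Z] 0) (𝓝 0) := by
  have hsnd : Tendsto (fun p : E × ℝ ↦ M * p.2) (𝓝[cone Z] 0) (𝓝 0) := by
    simpa using ((continuous_snd.tendsto (0 : E × ℝ)).mono_left nhdsWithin_le_nhds).const_mul M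
  exact squeeze_zero_norm' (eventually_nhdsWithin_of_forall fun _ ↦ norm_perspective_le hM) hsnd

variable [ContinuousSMul ℝ E]

theorem continuousWithinAt_perspective_of_pos (hf : ContinuousOn f Z) (hp : p ∈ cone Z)
    (hpos : 0 < p.2) : ContinuousWithinAt (perspective f) (cone Z) p := by
  set V := cone Z ∩ {q | 0 < q.2}
  have hV : {q : E × ℝ | 0 < q.2} ∈ 𝓝 p :=
    (isOpen_lt continuous_const continuous_snd).mem_nhds hpos
  have hdehom : ContinuousWithinAt (fun q : E × ℝ ↦ q.2⁻¹ • q.1) V p :=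
    ((continuous_snd.continuousAt.inv₀ hpos.ne').smul
      continuous_fst.continuousAt).continuousWithinAt
  have hf' : ContinuousWithinAt (fun q : E × ℝ ↦ f (q.2⁻¹ • q.1)) V p :=
    (hf _ (inv_smul_mem_of_mem_cone hp hpos)).comp (x := p) hdehom
      fun q hq ↦ inv_smul_mem_of_mem_cone hq.1 hq.2
  rw [← continuousWithinAt_inter hV]
  exact (continuous_snd.continuousWithinAt.mul hf').congr (fun q hq ↦ if_pos hq.2) (if_pos hpos)

theorem continuousOn_perspective (hZ : IsCompact Z) (hf : ContinuousOn f Z) :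
    ContinuousOn (perspective f) (cone Z) := by
  intro p hp
  rcases hp.1.lt_or_eq with hpos | h0
  · exact continuousWithinAt_perspective_of_pos hf hp hpos
  obtain rfl := eq_zero_of_mem_cone_of_snd_eq_zero hp h0.symm
  obtain ⟨M, hM⟩ := hZ.exists_bound_of_continuousOn hf
  simpa [ContinuousWithinAt, perspective] using tendsto_perspective_zero hM

end Perspective

theorem perspective_continuousOn_cone_general (n d : ℕ) (Z : Set (Fin d → ℝ))
    (hZcomp : IsCompact Z)
    (g : (Fin n → ℝ) → (Fin d → ℝ) → ℝ) (x : Fin n → ℝ)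
    (hcont : ContinuousOn (g x) Z)
    (gt : (Fin d → ℝ) × ℝ → ℝ)
    (hgt : ∀ p, gt p = if 0 < p.2 then p.2 * g x (p.2⁻¹ • p.1) else 0) :
    ContinuousOn gt {p : (Fin d → ℝ) × ℝ | 0 ≤ p.2 ∧ p.1 ∈ p.2 • Z} ∧
      Filter.Tendsto gt
        (nhdsWithin ((0 : Fin d → ℝ), (0 : ℝ))
          {p : (Fin d → ℝ) × ℝ | 0 ≤ p.2 ∧ p.1 ∈ p.2 • Z})
        (nhds 0) := by
  obtain rfl : gt = Perspective.perspective (g x) := funext hgt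
  obtain ⟨M, hM⟩ := hZcomp.exists_bound_of_continuousOn hcont
  exact ⟨Perspective.continuousOn_perspective hZcomp hcont,
    Perspective.tendsto_perspective_zero hM⟩

/-- The perspective `g̃(x,·)` of a concave continuous `g(x,·)` on a convex compact `Z ∋ 0`
is continuous on the cone `U = {(z̃,λ) : λ ≥ 0, z̃ ∈ λZ}`; in particular it tends to `0`
at the origin within `U`. -/
theorem perspective_continuousOn_cone (n d : ℕ) (Z : Set (Fin d → ℝ))
    (hZconv : Convex ℝ Z) (hZcomp : IsCompact Z) (hZ0 : (0 : Fin d → ℝ) ∈ Z)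
    (g : (Fin n → ℝ) → (Fin d → ℝ) → ℝ) (x : Fin n → ℝ)
    (hconc : ConcaveOn ℝ Z (g x)) (hcont : ContinuousOn (g x) Z)
    (gt : (Fin d → ℝ) × ℝ → ℝ)
    (hgt : ∀ p, gt p = if 0 < p.2 then p.2 * g x (p.2⁻¹ • p.1) else 0) :
    ContinuousOn gt {p : (Fin d → ℝ) × ℝ | 0 ≤ p.2 ∧ p.1 ∈ p.2 • Z} ∧
      Filter.Tendsto gt
        (nhdsWithin ((0 : Fin d → ℝ), (0 : ℝ))
          {p : (Fin d → ℝ) × ℝ | 0 ≤ p.2 ∧ p.1 ∈ p.2 • Z})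
        (nhds 0) :=
  perspective_continuousOn_cone_general n d Z hZcomp g x hcont gt hgt
end

section
/- Under the setting of the saddle-point Lagrangian with the Slater condition (there exists x̂ ∈ int(X) with Ax̂ = b and an ε > 0 such that x̂ + y ∈ X and f_i(x̂ + y) < 0 for all ‖y‖ ≤ ε), and with A of full row rank, the optimal dual variable w* for the equality constraints satisfies ‖w*‖ ≤ (1/σ_min(A)) · ((cᵀx̂ − v̲)/ε + ‖c‖), where v̲ is any strict lower bound on the optimal value. -/
open scoped RealInnerProductSpace

/-!
Testing the second saddle inequality at the Slater points `x̂ + y`, `‖y‖ ≤ ε`, and using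
`L(x*, λ*, w*) ≥ cᵀx*` (first saddle inequality at `λ = 0`) gives
`cᵀx* ≤ cᵀx̂ + ⟪c + Aᵀw*, y⟫` on the whole ball. Taking `y` antiparallel to `c + Aᵀw*` yields
`ε‖c + Aᵀw*‖ ≤ cᵀx̂ − cᵀx* < cᵀx̂ − v̲`, and `σ_min ‖w*‖ ≤ ‖Aᵀw*‖ ≤ ‖c + Aᵀw*‖ + ‖c‖`.
-/

section

variable {E F : Type*} [NormedAddCommGroup E] [InnerProductSpace ℝ E]
  [NormedAddCommGroup F] [InnerProductSpace ℝ F]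

theorem mul_norm_le_neg_of_forall_le_inner {g : E} {ε t : ℝ} (hε : 0 ≤ ε)
    (h : ∀ y : E, ‖y‖ ≤ ε → t ≤ ⟪g, y⟫) : ε * ‖g‖ ≤ -t := by
  rcases eq_or_ne g 0 with rfl | hg
  · simpa using h 0 (by simpa using hε)
  have hng : 0 < ‖g‖ := norm_pos_iff.mpr hg
  have hy : ‖(-(ε / ‖g‖)) • g‖ ≤ ε := by
    rw [norm_smul, norm_neg, Real.norm_of_nonneg (by positivity), div_mul_cancel₀ _ hng.ne']
  have hinner : ⟪g, (-(ε / ‖g‖)) • g⟫ = -(ε * ‖g‖) := by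
    rw [real_inner_smul_right, real_inner_self_eq_norm_sq]
    field_simp
  linarith [h _ hy]

theorem inner_le_add_inner_of_isSaddlePoint {ι : Type*} [Fintype ι] {X : Set E} {c : E}
    {f : ι → E → ℝ} {A : E →L[ℝ] F} {b : F} {L : E → (ι → ℝ) → F → ℝ}
    (hL : ∀ x lam w, L x lam w = ⟪c, x⟫ + ∑ i, lam i * f i x + ⟪w, A x - b⟫)
    {xstar : E} {lamstar : ι → ℝ} {wstar : F} (hxsA : A xstar = b)
    (hlampos : ∀ i, 0 ≤ lamstar i)
    (hsaddle1 : ∀ lam : ι → ℝ, (∀ i, 0 ≤ lam i) → ∀ w, L xstar lam w ≤ L xstar lamstar wstar)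
    (hsaddle2 : ∀ x ∈ X, L xstar lamstar wstar ≤ L x lamstar wstar)
    {x : E} (hxX : x ∈ X) (hxf : ∀ i, f i x ≤ 0) :
    ⟪c, xstar⟫ ≤ ⟪c, x⟫ + ⟪wstar, A x - b⟫ := by
  have hstar : ⟪c, xstar⟫ ≤ L xstar lamstar wstar := by
    simpa [hL, hxsA] using hsaddle1 0 (fun _ => le_rfl) wstar
  have hpenalty : ∑ i, lamstar i * f i x ≤ 0 :=
    Finset.sum_nonpos fun i _ => mul_nonpos_of_nonneg_of_nonpos (hlampos i) (hxf i)
  linarith [hsaddle2 x hxX, hL x lamstar wstar]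

theorem mul_norm_add_adjoint_le [CompleteSpace E] [CompleteSpace F] {A : E →L[ℝ] F}
    {b : F} {c xhat : E} {w : F} {ε t : ℝ} (hε : 0 ≤ ε) (hA : A xhat = b)
    (h : ∀ y : E, ‖y‖ ≤ ε → t ≤ ⟪c, xhat + y⟫ + ⟪w, A (xhat + y) - b⟫) :
    ε * ‖c + ContinuousLinearMap.adjoint A w‖ ≤ ⟪c, xhat⟫ - t := by
  have := mul_norm_le_neg_of_forall_le_inner (g := c + ContinuousLinearMap.adjoint A w)
    (t := t - ⟪c, xhat⟫) hε fun y hy => by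
      have hy := h y hy
      rw [map_add, hA, add_sub_cancel_left, inner_add_right,
        ← ContinuousLinearMap.adjoint_inner_left] at hy
      rw [inner_add_left]
      linarith
  linarith

end

theorem dual_equality_multiplier_bound_general (n m r : ℕ)
    (X : Set (EuclideanSpace ℝ (Fin n)))
    (c : EuclideanSpace ℝ (Fin n)) (f : Fin m → EuclideanSpace ℝ (Fin n) → ℝ)
    (A : EuclideanSpace ℝ (Fin n) →L[ℝ] EuclideanSpace ℝ (Fin r))
    (b : EuclideanSpace ℝ (Fin r))
    (L : EuclideanSpace ℝ (Fin n) → (Fin m → ℝ) → EuclideanSpace ℝ (Fin r) → ℝ)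
    (hL : ∀ x lam w, L x lam w = ⟪c, x⟫ + ∑ i, lam i * f i x + ⟪w, A x - b⟫)
    -- σ_min(A) > 0, the smallest singular value of A (full row rank)
    (σmin : ℝ) (hσpos : 0 < σmin)
    (hσ : ∀ w : EuclideanSpace ℝ (Fin r), σmin * ‖w‖ ≤ ‖ContinuousLinearMap.adjoint A w‖)
    (xstar xhat : EuclideanSpace ℝ (Fin n))
    -- x* is an optimal solution
    (hxsX : xstar ∈ X) (hxsf : ∀ i, f i xstar ≤ 0) (hxsA : A xstar = b)
    -- Slater condition with constant ε
    (eps : ℝ) (heps : 0 < eps)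
    (hhA : A xhat = b)
    (hslater : ∀ y : EuclideanSpace ℝ (Fin n), ‖y‖ ≤ eps →
      xhat + y ∈ X ∧ ∀ i, f i (xhat + y) < 0)
    -- v̲ is a strict lower bound on the optimal value
    (v : ℝ) (hv : ∀ x ∈ X, (∀ i, f i x ≤ 0) → A x = b → v < ⟪c, x⟫)
    -- (x*, (λ*, w*)) is a saddle point of L over X × ℝ₊ᵐ × ℝʳ
    (lamstar : Fin m → ℝ) (wstar : EuclideanSpace ℝ (Fin r))
    (hlampos : ∀ i, 0 ≤ lamstar i)
    (hsaddle1 : ∀ lam : Fin m → ℝ, (∀ i, 0 ≤ lam i) →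
      ∀ w, L xstar lam w ≤ L xstar lamstar wstar)
    (hsaddle2 : ∀ x ∈ X, L xstar lamstar wstar ≤ L x lamstar wstar) :
    ‖wstar‖ ≤ (1 / σmin) * ((⟪c, xhat⟫ - v) / eps + ‖c‖) := by
  have hball : eps * ‖c + ContinuousLinearMap.adjoint A wstar‖ ≤ ⟪c, xhat⟫ - ⟪c, xstar⟫ :=
    mul_norm_add_adjoint_le heps.le hhA fun y hy =>
      inner_le_add_inner_of_isSaddlePoint hL hxsA hlampos hsaddle1 hsaddle2 (hslater y hy).1
        fun i => (hslater y hy).2 i |>.le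
  have hvstar : v < ⟪c, xstar⟫ := hv xstar hxsX hxsf hxsA
  have hadjoint : ‖ContinuousLinearMap.adjoint A wstar‖ ≤ (⟪c, xhat⟫ - v) / eps + ‖c‖ := by
    have htriangle := norm_sub_le (c + ContinuousLinearMap.adjoint A wstar) c
    rw [add_sub_cancel_left] at htriangle
    have := mul_le_mul_of_nonneg_left htriangle heps.le
    rw [div_add' _ _ _ heps.ne', le_div_iff₀ heps]
    linarith
  rw [one_div_mul_eq_div, le_div_iff₀ hσpos]
  linarith [hσ wstar]

/-- Bound on the optimal dual variable of the equality constraints: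
`‖w*‖ ≤ (1/σ_min(A))·((cᵀx̂ − v̲)/ε + ‖c‖)`. -/
theorem dual_equality_multiplier_bound (n m r : ℕ)
    (X : Set (EuclideanSpace ℝ (Fin n))) (hXc : IsClosed X) (hXconv : Convex ℝ X)
    (c : EuclideanSpace ℝ (Fin n)) (f : Fin m → EuclideanSpace ℝ (Fin n) → ℝ)
    (A : EuclideanSpace ℝ (Fin n) →L[ℝ] EuclideanSpace ℝ (Fin r))
    (b : EuclideanSpace ℝ (Fin r))
    (L : EuclideanSpace ℝ (Fin n) → (Fin m → ℝ) → EuclideanSpace ℝ (Fin r) → ℝ)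
    (hL : ∀ x lam w, L x lam w = ⟪c, x⟫ + ∑ i, lam i * f i x + ⟪w, A x - b⟫)
    -- σ_min(A) > 0, the smallest singular value of A (full row rank)
    (σmin : ℝ) (hσpos : 0 < σmin)
    (hσ : ∀ w : EuclideanSpace ℝ (Fin r), σmin * ‖w‖ ≤ ‖ContinuousLinearMap.adjoint A w‖)
    (xstar xhat : EuclideanSpace ℝ (Fin n))
    -- x* is an optimal solution
    (hxsX : xstar ∈ X) (hxsf : ∀ i, f i xstar ≤ 0) (hxsA : A xstar = b)
    (hopt : ∀ x ∈ X, (∀ i, f i x ≤ 0) → A x = b → ⟪c, xstar⟫ ≤ ⟪c, x⟫)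
    -- Slater condition with constant ε
    (eps : ℝ) (heps : 0 < eps)
    (hhint : xhat ∈ interior X) (hhA : A xhat = b)
    (hslater : ∀ y : EuclideanSpace ℝ (Fin n), ‖y‖ ≤ eps →
      xhat + y ∈ X ∧ ∀ i, f i (xhat + y) < 0)
    -- v̲ is a strict lower bound on the optimal value
    (v : ℝ) (hv : ∀ x ∈ X, (∀ i, f i x ≤ 0) → A x = b → v < ⟪c, x⟫)
    -- (x*, (λ*, w*)) is a saddle point of L over X × ℝ₊ᵐ × ℝʳ
    (lamstar : Fin m → ℝ) (wstar : EuclideanSpace ℝ (Fin r))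
    (hlampos : ∀ i, 0 ≤ lamstar i)
    (hsaddle1 : ∀ lam : Fin m → ℝ, (∀ i, 0 ≤ lam i) →
      ∀ w, L xstar lam w ≤ L xstar lamstar wstar)
    (hsaddle2 : ∀ x ∈ X, L xstar lamstar wstar ≤ L x lamstar wstar) :
    ‖wstar‖ ≤ (1 / σmin) * ((⟪c, xhat⟫ - v) / eps + ‖c‖) :=
  dual_equality_multiplier_bound_general n m r X c f A b L hL σmin hσpos hσ xstar xhat hxsX hxsf
    hxsA eps heps hhA hslater v hv lamstar wstar hlampos hsaddle1 hsaddle2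
end

section
/- Let X ⊆ ℝⁿ be closed convex and σ_X(π) = sup_{x∈X} πᵀx its support function. For a bilinear saddle function L̄(x,(u,w)) = cᵀx + xᵀQ̃u + q̃ᵀu + wᵀ(Ax−b) with saddle point (x*,(u*,w*)) over X × U × ℝʳ, set π* = −c − Q̃u* − Aᵀw*. Then (x*,(u*,w*,π*)) is a saddle point of L̃(x,(u,w,π)) = xᵀ(c + Aᵀw + Q̃u + π) + q̃ᵀu − bᵀw − σ_X(π) over ℝⁿ × (U × ℝʳ × ℝⁿ). Conversely, any saddle point of L̃ yields a saddle point of L̄ with the same x*, u*, w*. -/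
open scoped RealInnerProductSpace

/-!
At a saddle point of `L̄`, minimality in `x ∈ X` says exactly that `x*` maximizes `⟪π*, ·⟫` on
`X` for `π* = -∇ₓL̄(·, u*, w*)`, i.e. that `σ_X(π*) = ⟪π*, x*⟫`; with this choice `L̃` becomes
constant in `x`, and the Fenchel–Young inequality `⟪x*, π⟫ - σ_X(π) ≤ 0` handles maximality
in `(u, w, π)`. Conversely, comparing `π*` with `π = 0` gives `σ_X(π*) ≤ ⟪π*, x*⟫`, so again
`x*` maximizes `⟪π*, ·⟫` on `X`; then `L̃(·, u*, w*, π*)` is a real affine function of `x`,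
which can only be minimized on all of `ℝⁿ` if its slope `∇ₓL̄ + π*` vanishes.
-/

section SupportFunction

variable {E : Type*} [NormedAddCommGroup E] [InnerProductSpace ℝ E] {X : Set E} {π x x₀ : E}

noncomputable def supportFunction (X : Set E) (π : E) : EReal :=
  ⨆ x ∈ X, ((⟪π, x⟫ : ℝ) : EReal)

theorem inner_le_supportFunction (hx : x ∈ X) : ((⟪π, x⟫ : ℝ) : EReal) ≤ supportFunction X π :=
  le_iSup₂ (f := fun x (_ : x ∈ X) => ((⟪π, x⟫ : ℝ) : EReal)) x hx

theorem supportFunction_le_iff_isMaxOn :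
    supportFunction X π ≤ ⟪π, x₀⟫ ↔ IsMaxOn (⟪π, ·⟫) X x₀ := by
  refine ⟨fun h x hx => ?_, fun h => iSup₂_le fun x hx => EReal.coe_le_coe_iff.mpr (h hx)⟩
  exact EReal.coe_le_coe_iff.mp ((inner_le_supportFunction hx).trans h)

theorem supportFunction_eq_of_isMaxOn (hx₀ : x₀ ∈ X) (h : IsMaxOn (⟪π, ·⟫) X x₀) :
    supportFunction X π = ⟪π, x₀⟫ :=
  le_antisymm (supportFunction_le_iff_isMaxOn.mpr h) (inner_le_supportFunction hx₀)

theorem supportFunction_zero (hX : X.Nonempty) : supportFunction X 0 = 0 := by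
  obtain ⟨x₀, hx₀⟩ := hX
  simpa using supportFunction_eq_of_isMaxOn (π := 0) hx₀ (by simp [IsMaxOn, IsMaxFilter])

theorem coe_add_inner_sub_supportFunction_le (a : ℝ) (hx : x ∈ X) :
    ((a + ⟪x, π⟫ : ℝ) : EReal) - supportFunction X π ≤ a := by
  calc ((a + ⟪x, π⟫ : ℝ) : EReal) - supportFunction X π
      ≤ ((a + ⟪x, π⟫ : ℝ) : EReal) - ((⟪π, x⟫ : ℝ) : EReal) :=
        EReal.sub_le_sub le_rfl (inner_le_supportFunction hx)
    _ = a := by rw [← EReal.coe_sub, real_inner_comm, add_sub_cancel_right]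

end SupportFunction

theorem EReal.coe_le_coe_add_sub_iff (a t : ℝ) (s : EReal) :
    (a : EReal) ≤ ((a + t : ℝ) : EReal) - s ↔ s ≤ t := by
  rw [EReal.le_sub_iff_add_le (.inr (EReal.coe_ne_bot _)) (.inr (EReal.coe_ne_top _)),
    EReal.coe_add, (EReal.addLECancellable_coe a).add_le_add_iff_left]

theorem eq_zero_of_forall_inner_le {E : Type*} [NormedAddCommGroup E] [InnerProductSpace ℝ E]
    {x₀ v : E} (h : ∀ x, ⟪x₀, v⟫ ≤ ⟪x, v⟫) : v = 0 := by
  have := h (x₀ - v)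
  rw [inner_sub_left] at this
  exact inner_self_eq_zero.mp (le_antisymm (by linarith) real_inner_self_nonneg)

section DualLagrangian

variable {E F G : Type*} [NormedAddCommGroup E] [InnerProductSpace ℝ E]
  {X : Set E} {U : Set F} {L : E → F → G → ℝ} {x₀ π₀ : E} {u₀ : F} {w₀ : G}

variable (X L) in
/-- `L(x, u, w) + δ_X(x)` with `δ_X(x) = sup_π (⟪x, π⟫ - σ_X(π))` unfolded. -/
noncomputable def dualLagrangian (x : E) (u : F) (w : G) (π : E) : EReal :=
  ((L x u w + ⟪x, π⟫ : ℝ) : EReal) - supportFunction X π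

theorem dualLagrangian_eq_of_isMaxOn (hx₀ : x₀ ∈ X) (hmax : IsMaxOn (⟪π₀, ·⟫) X x₀)
    (x : E) (u : F) (w : G) :
    dualLagrangian X L x u w π₀ = ((L x u w + ⟪x, π₀⟫ - ⟪π₀, x₀⟫ : ℝ) : EReal) := by
  rw [dualLagrangian, supportFunction_eq_of_isMaxOn hx₀ hmax, EReal.coe_sub]

theorem dualLagrangian_saddle_of_saddle {C : ℝ} (hx₀ : x₀ ∈ X)
    (hL : ∀ x, L x u₀ w₀ + ⟪x, π₀⟫ = C)
    (hu : ∀ u ∈ U, ∀ w, L x₀ u w ≤ L x₀ u₀ w₀) (hx : ∀ x ∈ X, L x₀ u₀ w₀ ≤ L x u₀ w₀) :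
    (∀ u ∈ U, ∀ w π, dualLagrangian X L x₀ u w π ≤ dualLagrangian X L x₀ u₀ w₀ π₀) ∧
      ∀ x, dualLagrangian X L x₀ u₀ w₀ π₀ ≤ dualLagrangian X L x u₀ w₀ π₀ := by
  have hmax : IsMaxOn (⟪π₀, ·⟫) X x₀ := isMaxOn_iff.mpr fun x hx' => by
    rw [real_inner_comm x, real_inner_comm x₀]
    linarith [hx x hx', hL x, hL x₀]
  have hval := dualLagrangian_eq_of_isMaxOn (L := L) (u := u₀) (w := w₀) hx₀ hmax
  refine ⟨fun u hu' w π => ?_, fun x => by rw [hval, hval, hL, hL]⟩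
  calc dualLagrangian X L x₀ u w π ≤ L x₀ u w := coe_add_inner_sub_supportFunction_le _ hx₀
    _ ≤ L x₀ u₀ w₀ := EReal.coe_le_coe_iff.mpr (hu u hu' w)
    _ = dualLagrangian X L x₀ u₀ w₀ π₀ := by rw [hval, real_inner_comm, add_sub_cancel_right]

theorem saddle_of_dualLagrangian_saddle {g : E} {C : ℝ} (hx₀ : x₀ ∈ X) (hu₀ : u₀ ∈ U)
    (hL : ∀ x, L x u₀ w₀ = ⟪x, g⟫ + C)
    (hu : ∀ u ∈ U, ∀ w π, dualLagrangian X L x₀ u w π ≤ dualLagrangian X L x₀ u₀ w₀ π₀)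
    (hx : ∀ x, dualLagrangian X L x₀ u₀ w₀ π₀ ≤ dualLagrangian X L x u₀ w₀ π₀) :
    (∀ u ∈ U, ∀ w, L x₀ u w ≤ L x₀ u₀ w₀) ∧ ∀ x ∈ X, L x₀ u₀ w₀ ≤ L x u₀ w₀ := by
  have hσ_le : supportFunction X π₀ ≤ ⟪π₀, x₀⟫ := by
    have := hu u₀ hu₀ w₀ 0
    rwa [dualLagrangian, dualLagrangian, inner_zero_right, add_zero,
      supportFunction_zero ⟨x₀, hx₀⟩, sub_zero, EReal.coe_le_coe_add_sub_iff,
      real_inner_comm] at this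
  have hmax := supportFunction_le_iff_isMaxOn.mp hσ_le
  have hval := dualLagrangian_eq_of_isMaxOn (L := L) hx₀ hmax
  have hslope : g + π₀ = 0 := eq_zero_of_forall_inner_le fun x => by
    have := hx x
    rw [hval, hval, EReal.coe_le_coe_iff, hL, hL] at this
    rw [inner_add_right, inner_add_right]
    linarith
  refine ⟨fun u hu' w => ?_, fun x hx' => ?_⟩
  · have := hu u hu' w π₀
    rwa [hval, hval, EReal.coe_le_coe_iff, sub_le_sub_iff_right, add_le_add_iff_right] at this
  · have := isMaxOn_iff.mp hmax x hx'
    rw [real_inner_comm x, real_inner_comm x₀] at this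
    rw [hL, hL, eq_neg_of_add_eq_zero_left hslope, inner_neg_right, inner_neg_right]
    linarith

end DualLagrangian

theorem saddle_Lbar_iff_saddle_Ltil_general (n K r : ℕ)
    (X : Set (EuclideanSpace ℝ (Fin n)))
    (U : Set (EuclideanSpace ℝ (Fin K)))
    (Q : EuclideanSpace ℝ (Fin K) →L[ℝ] EuclideanSpace ℝ (Fin n))
    (q : EuclideanSpace ℝ (Fin K))
    (A : EuclideanSpace ℝ (Fin n) →L[ℝ] EuclideanSpace ℝ (Fin r))
    (b : EuclideanSpace ℝ (Fin r)) (c : EuclideanSpace ℝ (Fin n))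
    -- support function of X, valued in EReal to allow +∞
    (σX : EuclideanSpace ℝ (Fin n) → EReal)
    (hσX : ∀ π, σX π = ⨆ x ∈ X, ((⟪π, x⟫ : ℝ) : EReal))
    (Lbar : EuclideanSpace ℝ (Fin n) → EuclideanSpace ℝ (Fin K) →
      EuclideanSpace ℝ (Fin r) → ℝ)
    (hLbar : ∀ x u w, Lbar x u w = ⟪c, x⟫ + ⟪x, Q u⟫ + ⟪q, u⟫ + ⟪w, A x - b⟫)
    (Ltil : EuclideanSpace ℝ (Fin n) → EuclideanSpace ℝ (Fin K) →
      EuclideanSpace ℝ (Fin r) → EuclideanSpace ℝ (Fin n) → EReal)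
    (hLtil : ∀ x u w π, Ltil x u w π =
      (((⟪x, c + ContinuousLinearMap.adjoint A w + Q u + π⟫ + ⟪q, u⟫ - ⟪b, w⟫ : ℝ)) : EReal)
        - σX π)
    (xstar : EuclideanSpace ℝ (Fin n)) (ustar : EuclideanSpace ℝ (Fin K))
    (wstar : EuclideanSpace ℝ (Fin r))
    (hxstar : xstar ∈ X) (hustar : ustar ∈ U) :
    -- forward direction: a saddle point of L̄ yields one of L̃ with π* as below
    ((((∀ u ∈ U, ∀ w, Lbar xstar u w ≤ Lbar xstar ustar wstar) ∧
        (∀ x ∈ X, Lbar xstar ustar wstar ≤ Lbar x ustar wstar)) →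
      ((∀ u ∈ U, ∀ w π, Ltil xstar u w π ≤
          Ltil xstar ustar wstar (-c - Q ustar - ContinuousLinearMap.adjoint A wstar)) ∧
        (∀ x, Ltil xstar ustar wstar (-c - Q ustar - ContinuousLinearMap.adjoint A wstar) ≤
          Ltil x ustar wstar (-c - Q ustar - ContinuousLinearMap.adjoint A wstar)))) ∧
    -- converse: a saddle point of L̃ yields a saddle point of L̄ with the same x*, u*, w*
    (∀ pistar : EuclideanSpace ℝ (Fin n),
      ((∀ u ∈ U, ∀ w π, Ltil xstar u w π ≤ Ltil xstar ustar wstar pistar) ∧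
        (∀ x, Ltil xstar ustar wstar pistar ≤ Ltil x ustar wstar pistar)) →
      ((∀ u ∈ U, ∀ w, Lbar xstar u w ≤ Lbar xstar ustar wstar) ∧
        (∀ x ∈ X, Lbar xstar ustar wstar ≤ Lbar x ustar wstar)))) := by
  obtain rfl : σX = supportFunction X := funext hσX
  have hLbar_affine : ∀ u w x,
      Lbar x u w = ⟪x, c + ContinuousLinearMap.adjoint A w + Q u⟫ + (⟪q, u⟫ - ⟪b, w⟫) := by
    intro u w x
    rw [hLbar, inner_sub_right, inner_add_right, inner_add_right,
      ContinuousLinearMap.adjoint_inner_right, real_inner_comm c, real_inner_comm w,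
      real_inner_comm w]
    ring
  obtain rfl : Ltil = dualLagrangian X Lbar := by
    funext x u w π
    rw [hLtil, dualLagrangian, hLbar_affine, inner_add_right x _ π]
    congr 2
    ring
  have hconst : ∀ x, Lbar x ustar wstar + ⟪x, -c - Q ustar - ContinuousLinearMap.adjoint A wstar⟫
      = ⟪q, ustar⟫ - ⟪b, wstar⟫ := fun x => by
    rw [hLbar_affine, add_right_comm, ← inner_add_right,
      show c + ContinuousLinearMap.adjoint A wstar + Q ustar
        + (-c - Q ustar - ContinuousLinearMap.adjoint A wstar) = 0 by abel,
      inner_zero_right, zero_add]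
  exact ⟨fun ⟨hu, hx⟩ => dualLagrangian_saddle_of_saddle hxstar hconst hu hx,
    fun _ ⟨hu, hx⟩ => saddle_of_dualLagrangian_saddle hxstar hustar (hLbar_affine _ _) hu hx⟩

/-- Equivalence of saddle points of the bilinear lifted Lagrangian `L̄` over `X × U × ℝʳ`
and of `L̃` (obtained by dualizing the indicator of `X` via its support function)
over `ℝⁿ × (U × ℝʳ × ℝⁿ)`. -/
theorem saddle_Lbar_iff_saddle_Ltil (n K r : ℕ)
    (X : Set (EuclideanSpace ℝ (Fin n))) (hXc : IsClosed X) (hXconv : Convex ℝ X)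
    (hXne : X.Nonempty)
    (U : Set (EuclideanSpace ℝ (Fin K))) (hUconv : Convex ℝ U)
    (Q : EuclideanSpace ℝ (Fin K) →L[ℝ] EuclideanSpace ℝ (Fin n))
    (q : EuclideanSpace ℝ (Fin K))
    (A : EuclideanSpace ℝ (Fin n) →L[ℝ] EuclideanSpace ℝ (Fin r))
    (b : EuclideanSpace ℝ (Fin r)) (c : EuclideanSpace ℝ (Fin n))
    -- support function of X, valued in EReal to allow +∞
    (σX : EuclideanSpace ℝ (Fin n) → EReal)
    (hσX : ∀ π, σX π = ⨆ x ∈ X, ((⟪π, x⟫ : ℝ) : EReal))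
    (Lbar : EuclideanSpace ℝ (Fin n) → EuclideanSpace ℝ (Fin K) →
      EuclideanSpace ℝ (Fin r) → ℝ)
    (hLbar : ∀ x u w, Lbar x u w = ⟪c, x⟫ + ⟪x, Q u⟫ + ⟪q, u⟫ + ⟪w, A x - b⟫)
    (Ltil : EuclideanSpace ℝ (Fin n) → EuclideanSpace ℝ (Fin K) →
      EuclideanSpace ℝ (Fin r) → EuclideanSpace ℝ (Fin n) → EReal)
    (hLtil : ∀ x u w π, Ltil x u w π =
      (((⟪x, c + ContinuousLinearMap.adjoint A w + Q u + π⟫ + ⟪q, u⟫ - ⟪b, w⟫ : ℝ)) : EReal)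
        - σX π)
    (xstar : EuclideanSpace ℝ (Fin n)) (ustar : EuclideanSpace ℝ (Fin K))
    (wstar : EuclideanSpace ℝ (Fin r))
    (hxstar : xstar ∈ X) (hustar : ustar ∈ U) :
    -- forward direction: a saddle point of L̄ yields one of L̃ with π* as below
    ((((∀ u ∈ U, ∀ w, Lbar xstar u w ≤ Lbar xstar ustar wstar) ∧
        (∀ x ∈ X, Lbar xstar ustar wstar ≤ Lbar x ustar wstar)) →
      ((∀ u ∈ U, ∀ w π, Ltil xstar u w π ≤
          Ltil xstar ustar wstar (-c - Q ustar - ContinuousLinearMap.adjoint A wstar)) ∧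
        (∀ x, Ltil xstar ustar wstar (-c - Q ustar - ContinuousLinearMap.adjoint A wstar) ≤
          Ltil x ustar wstar (-c - Q ustar - ContinuousLinearMap.adjoint A wstar)))) ∧
    -- converse: a saddle point of L̃ yields a saddle point of L̄ with the same x*, u*, w*
    (∀ pistar : EuclideanSpace ℝ (Fin n),
      ((∀ u ∈ U, ∀ w π, Ltil xstar u w π ≤ Ltil xstar ustar wstar pistar) ∧
        (∀ x, Ltil xstar ustar wstar pistar ≤ Ltil x ustar wstar pistar)) →
      ((∀ u ∈ U, ∀ w, Lbar xstar u w ≤ Lbar xstar ustar wstar) ∧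
        (∀ x ∈ X, Lbar xstar ustar wstar ≤ Lbar x ustar wstar)))) :=
  saddle_Lbar_iff_saddle_Ltil_general n K r X U Q q A b c σX hσX Lbar hLbar Ltil hLtil xstar ustar
    wstar hxstar hustar
end

section
/- Let Z ⊆ ℝᵈ be convex compact with 0 ∈ Z, and U = {(z̃, λ) : λ ≥ 0, z̃ ∈ λZ} its conic extension. Given (z̃₀, λ₀) ∉ U with σ_Z(z̃₀) > −λ₀, the Euclidean projection of (z̃₀, λ₀) onto U equals (μ*·P_Z(z̃₀/μ*), μ*) where μ* > 0 is the unique solution of μ‖P_Z(z̃₀/μ)‖² − z̃₀ᵀP_Z(z̃₀/μ) + μ − λ₀ = 0. If instead σ_Z(z̃₀) ≤ −λ₀, the projection is the origin. -/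
/-!
A point `q` of a set `C` is the projection of `y` onto `C` as soon as
`⟪y - q, c - q⟫ ≤ 0` for all `c ∈ C`, and two points of `C` satisfying this inequality coincide.
For `C = U` and `q = (μ w, μ)` with `w = P_Z(z̃₀/μ)`, the projection inequality of `w` scaled
by `μ` gives `⟪z̃₀ - μ w, x - w⟫ ≤ 0` on `Z`, while the root equation says exactly
`⟪z̃₀ - μ w, w⟫ = μ - λ₀`; together they give the inequality on all of `U`, since every point of
`U` is `(t x, t)` with `t ≥ 0`, `x ∈ Z`. When `σ_Z(z̃₀) ≤ -λ₀` the same inequality holds at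
`q = 0`.
-/

open scoped RealInnerProductSpace Pointwise

variable {E : Type*} [NormedAddCommGroup E] [InnerProductSpace ℝ E]

theorem norm_sub_sq_add_sq_le_of_inner_add_mul_nonpos {a b c : E} {s r t : ℝ}
    (h : ⟪a - b, c - b⟫ + (s - r) * (t - r) ≤ 0) :
    ‖a - b‖ ^ 2 + (s - r) ^ 2 ≤ ‖a - c‖ ^ 2 + (s - t) ^ 2 := by
  have hsplit : ‖a - c‖ ^ 2 = ‖a - b‖ ^ 2 - 2 * ⟪a - b, c - b⟫ + ‖c - b‖ ^ 2 := by
    rw [← norm_sub_sq_real, sub_sub_sub_cancel_right]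
  nlinarith [sq_nonneg ‖c - b‖, sq_nonneg (t - r)]

theorem eq_of_inner_add_mul_nonpos {a b b' : E} {s r r' : ℝ}
    (h : ⟪a - b, b' - b⟫ + (s - r) * (r' - r) ≤ 0)
    (h' : ⟪a - b', b - b'⟫ + (s - r') * (r - r') ≤ 0) : b = b' ∧ r = r' := by
  have hsum : ⟪a - b, b' - b⟫ + ⟪a - b', b - b'⟫ = ‖b' - b‖ ^ 2 := by
    rw [← neg_sub b' b, inner_neg_right, ← sub_eq_add_neg, ← inner_sub_left,
      sub_sub_sub_cancel_left, real_inner_self_eq_norm_sq]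
  have hzero : ‖b' - b‖ ^ 2 + (r' - r) ^ 2 = 0 := le_antisymm (by nlinarith) (by positivity)
  rw [add_eq_zero_iff_of_nonneg (by positivity) (by positivity)] at hzero
  simpa [sub_eq_zero, eq_comm] using hzero

theorem real_inner_sub_nonpos_of_forall_norm_sub_le {K : Set E} (hK : Convex ℝ K) {y p : E}
    (hp : p ∈ K) (hmin : ∀ x ∈ K, ‖y - p‖ ≤ ‖y - x‖) {x : E} (hx : x ∈ K) :
    ⟪y - p, x - p⟫ ≤ 0 := by
  have : Nonempty K := ⟨⟨p, hp⟩⟩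
  have hinf : ‖y - p‖ = ⨅ w : K, ‖y - w‖ :=
    (ciInf_eq_of_forall_ge_of_forall_gt_exists_lt (fun w : K => hmin w w.2)
      fun _ hlt => ⟨⟨p, hp⟩, hlt⟩).symm
  exact (norm_eq_iInf_iff_real_inner_le_zero hK hp).1 hinf x hx

theorem inner_add_mul_nonpos_of_root {K : Set E} (hK : Convex ℝ K) {P : E → E}
    (hP : ∀ y, P y ∈ K ∧ ∀ x ∈ K, ‖y - P y‖ ≤ ‖y - x‖) {z₀ : E} {l₀ μ : ℝ} (hμ : 0 < μ)
    (hroot : μ * ‖P (μ⁻¹ • z₀)‖ ^ 2 - ⟪z₀, P (μ⁻¹ • z₀)⟫ + μ - l₀ = 0)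
    {t : ℝ} (ht : 0 ≤ t) {x : E} (hx : x ∈ K) :
    ⟪z₀ - μ • P (μ⁻¹ • z₀), t • x - μ • P (μ⁻¹ • z₀)⟫ + (l₀ - μ) * (t - μ) ≤ 0 := by
  set w := P (μ⁻¹ • z₀)
  have hscaled : z₀ - μ • w = μ • (μ⁻¹ • z₀ - w) := by
    rw [smul_sub, smul_inv_smul₀ hμ.ne']
  have hproj : ⟪z₀ - μ • w, x - w⟫ ≤ 0 := by
    rw [hscaled, real_inner_smul_left]
    exact mul_nonpos_of_nonneg_of_nonpos hμ.le
      (real_inner_sub_nonpos_of_forall_norm_sub_le hK (hP _).1 (hP _).2 hx)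
  have hw : ⟪z₀ - μ • w, w⟫ = μ - l₀ := by
    rw [inner_sub_left, real_inner_smul_left, real_inner_self_eq_norm_sq]
    linarith
  have hx' : ⟪z₀ - μ • w, x⟫ ≤ μ - l₀ := by
    rw [inner_sub_right, hw] at hproj
    linarith
  rw [inner_sub_right, real_inner_smul_right, real_inner_smul_right, hw]
  nlinarith [mul_le_mul_of_nonneg_left hx' ht]

theorem projection_onto_cone_general (d : ℕ) (Z : Set (EuclideanSpace ℝ (Fin d)))
    (hZconv : Convex ℝ Z) (hZ0 : (0 : EuclideanSpace ℝ (Fin d)) ∈ Z)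
    (PZ : EuclideanSpace ℝ (Fin d) → EuclideanSpace ℝ (Fin d))
    (hPZ : ∀ y, PZ y ∈ Z ∧ ∀ x ∈ Z, ‖y - PZ y‖ ≤ ‖y - x‖)
    (U : Set (EuclideanSpace ℝ (Fin d) × ℝ))
    (hU : U = {p : EuclideanSpace ℝ (Fin d) × ℝ | 0 ≤ p.2 ∧ p.1 ∈ p.2 • Z})
    (z0 : EuclideanSpace ℝ (Fin d)) (l0 : ℝ)
    (σZ : ℝ) (hσZ : IsLUB ((fun z => (⟪z0, z⟫ : ℝ)) '' Z) σZ) :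
    ((z0, l0) ∉ U → -l0 < σZ → ∀ μ : ℝ, 0 < μ →
      μ * ‖PZ (μ⁻¹ • z0)‖ ^ 2 - ⟪z0, PZ (μ⁻¹ • z0)⟫ + μ - l0 = 0 →
      (((μ • PZ (μ⁻¹ • z0), μ) ∈ U ∧
        ∀ p ∈ U, ‖z0 - μ • PZ (μ⁻¹ • z0)‖ ^ 2 + (l0 - μ) ^ 2
          ≤ ‖z0 - p.1‖ ^ 2 + (l0 - p.2) ^ 2) ∧
      ∀ μ' : ℝ, 0 < μ' →
        μ' * ‖PZ (μ'⁻¹ • z0)‖ ^ 2 - ⟪z0, PZ (μ'⁻¹ • z0)⟫ + μ' - l0 = 0 → μ' = μ)) ∧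
    (σZ ≤ -l0 →
      ((0 : EuclideanSpace ℝ (Fin d)), (0 : ℝ)) ∈ U ∧
        ∀ p ∈ U, ‖z0‖ ^ 2 + l0 ^ 2 ≤ ‖z0 - p.1‖ ^ 2 + (l0 - p.2) ^ 2) := by
  subst hU
  refine ⟨fun _ _ μ hμ hroot => ⟨⟨⟨hμ.le, Set.smul_mem_smul_set (hPZ _).1⟩, ?_⟩,
    fun μ' hμ' hroot' => ?_⟩, fun hle => ⟨⟨le_rfl, 0, hZ0, smul_zero 0⟩, ?_⟩⟩
  · rintro ⟨_, t⟩ ⟨ht : 0 ≤ t, x, hx, rfl : t • x = _⟩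
    exact norm_sub_sq_add_sq_le_of_inner_add_mul_nonpos
      (inner_add_mul_nonpos_of_root hZconv hPZ hμ hroot ht hx)
  · exact (eq_of_inner_add_mul_nonpos
      (inner_add_mul_nonpos_of_root hZconv hPZ hμ hroot hμ'.le (hPZ _).1)
      (inner_add_mul_nonpos_of_root hZconv hPZ hμ' hroot' hμ.le (hPZ _).1)).2.symm
  · rintro ⟨_, t⟩ ⟨ht : 0 ≤ t, x, hx, rfl : t • x = _⟩
    have hx' : ⟪z0, x⟫ ≤ -l0 := (hσZ.1 ⟨x, hx, rfl⟩).trans hle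
    have hVI : ⟪z0 - 0, t • x - 0⟫ + (l0 - 0) * (t - 0) ≤ 0 := by
      rw [sub_zero, sub_zero, sub_zero, sub_zero, real_inner_smul_right]
      nlinarith [mul_le_mul_of_nonneg_left hx' ht]
    simpa using norm_sub_sq_add_sq_le_of_inner_add_mul_nonpos hVI

/-- Projection onto the conic extension `U = {(z̃,λ) : λ ≥ 0, z̃ ∈ λZ}` of a convex compact
set `Z ∋ 0`: if `(z̃₀,λ₀) ∉ U` and `σ_Z(z̃₀) > −λ₀` the projection is
`(μ*·P_Z(z̃₀/μ*), μ*)` with `μ* > 0` the unique root of the stated equation; if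
`σ_Z(z̃₀) ≤ −λ₀` the projection is the origin. -/
theorem projection_onto_cone (d : ℕ) (Z : Set (EuclideanSpace ℝ (Fin d)))
    (hZconv : Convex ℝ Z) (hZcomp : IsCompact Z) (hZ0 : (0 : EuclideanSpace ℝ (Fin d)) ∈ Z)
    (PZ : EuclideanSpace ℝ (Fin d) → EuclideanSpace ℝ (Fin d))
    (hPZ : ∀ y, PZ y ∈ Z ∧ ∀ x ∈ Z, ‖y - PZ y‖ ≤ ‖y - x‖)
    (U : Set (EuclideanSpace ℝ (Fin d) × ℝ))
    (hU : U = {p : EuclideanSpace ℝ (Fin d) × ℝ | 0 ≤ p.2 ∧ p.1 ∈ p.2 • Z})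
    (z0 : EuclideanSpace ℝ (Fin d)) (l0 : ℝ)
    (σZ : ℝ) (hσZ : IsLUB ((fun z => (⟪z0, z⟫ : ℝ)) '' Z) σZ) :
    ((z0, l0) ∉ U → -l0 < σZ → ∀ μ : ℝ, 0 < μ →
      μ * ‖PZ (μ⁻¹ • z0)‖ ^ 2 - ⟪z0, PZ (μ⁻¹ • z0)⟫ + μ - l0 = 0 →
      (((μ • PZ (μ⁻¹ • z0), μ) ∈ U ∧
        ∀ p ∈ U, ‖z0 - μ • PZ (μ⁻¹ • z0)‖ ^ 2 + (l0 - μ) ^ 2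
          ≤ ‖z0 - p.1‖ ^ 2 + (l0 - p.2) ^ 2) ∧
      ∀ μ' : ℝ, 0 < μ' →
        μ' * ‖PZ (μ'⁻¹ • z0)‖ ^ 2 - ⟪z0, PZ (μ'⁻¹ • z0)⟫ + μ' - l0 = 0 → μ' = μ)) ∧
    (σZ ≤ -l0 →
      ((0 : EuclideanSpace ℝ (Fin d)), (0 : ℝ)) ∈ U ∧
        ∀ p ∈ U, ‖z0‖ ^ 2 + l0 ^ 2 ≤ ‖z0 - p.1‖ ^ 2 + (l0 - p.2) ^ 2) :=
  projection_onto_cone_general d Z hZconv hZ0 PZ hPZ U hU z0 l0 σZ hσZ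
end

section
/- Let Z ⊆ ℝᵈ be convex compact with 0 ∈ Z. For any z̃ ∈ ℝᵈ, the function ψ(μ) = (μ²/2)·dist(z̃/μ, Z)² + (1/2)(λ − μ)² is strictly convex on μ > 0, and its derivative is ψ′(μ) = μ‖P_Z(z̃/μ)‖² − z̃ᵀP_Z(z̃/μ) + μ − λ. -/
/-!
For `μ > 0` the first term of `ψ` is `‖z̃ - μ • x‖² / 2` minimised over `x ∈ Z`, attained at
`x = P_Z(μ⁻¹ • z̃)`. The minimum `‖z̃ - μ • P_Z(μ⁻¹ • z̃)‖` is convex in `μ`: for `μ = a μ₁ + b μ₂`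
the combination of the two minimisers with weights `a μ₁ / μ`, `b μ₂ / μ` lies in `Z` and realises
the convex combination of the residuals. Adding the strictly convex `(λ - μ)² / 2` gives strict
convexity. Freezing the minimiser at `μ₀` yields a smooth function touching `ψ` from above at `μ₀`;
a convex function touched from above by a differentiable one has its one-sided derivatives
squeezed together, so it is differentiable there with the same derivative.
-/

open scoped RealInnerProductSpace
open Set Topology

theorem ConvexOn.hasDerivAt_of_le_of_eq {s : Set ℝ} {f g : ℝ → ℝ} {x g' : ℝ}
    (hf : ConvexOn ℝ s f) (hx : x ∈ interior s) (hfg : ∀ y ∈ s, f y ≤ g y) (hfgx : f x = g x)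
    (hg : HasDerivAt g g' x) : HasDerivAt f g' x := by
  have hs : ∀ᶠ y in 𝓝 x, y ∈ s := mem_interior_iff_mem_nhds.mp hx
  have hright : derivWithin f (Ioi x) x ≤ g' := by
    refine ge_of_tendsto (hg.tendsto_slope.mono_left (nhdsGT_le_nhdsNE x)) ?_
    filter_upwards [self_mem_nhdsWithin, nhdsWithin_le_nhds hs] with y (hxy : x < y) hy
    refine (hf.rightDeriv_le_slope_of_mem_interior hx hy hxy).trans ?_
    rw [slope_def_field, slope_def_field, hfgx]
    gcongr
    exact hfg y hy
  have hleft : g' ≤ derivWithin f (Iio x) x := by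
    refine le_of_tendsto (hg.tendsto_slope.mono_left (nhdsLT_le_nhdsNE x)) ?_
    filter_upwards [self_mem_nhdsWithin, nhdsWithin_le_nhds hs] with y (hyx : y < x) hy
    refine le_trans ?_ (hf.slope_le_leftDeriv_of_mem_interior hy hx hyx)
    rw [slope_comm f, slope_def_field, slope_def_field, hfgx]
    exact div_le_div_of_nonpos_of_le (by linarith) (by linarith [hfg y hy])
  have hmid := hf.leftDeriv_le_rightDeriv_of_mem_interior hx
  have hL := hf.hasDerivWithinAt_leftDeriv_of_mem_interior hx
  have hR := hf.hasDerivWithinAt_rightDeriv_of_mem_interior hx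
  rw [le_antisymm (hmid.trans hright) hleft] at hL
  rw [le_antisymm hright (hleft.trans hmid)] at hR
  rw [hasDerivAt_iff_tendsto_slope_left_right]
  exact ⟨(hasDerivWithinAt_iff_tendsto_slope' self_notMem_Iio).1 hL,
    (hasDerivWithinAt_iff_tendsto_slope' self_notMem_Ioi).1 hR⟩

theorem Metric.infDist_eq_dist_of_forall_dist_le {α : Type*} [PseudoMetricSpace α] {s : Set α}
    {x p : α} (hp : p ∈ s) (hmin : ∀ y ∈ s, dist x p ≤ dist x y) :
    Metric.infDist x s = dist x p :=
  le_antisymm (Metric.infDist_le_dist_of_mem hp) ((Metric.le_infDist ⟨p, hp⟩).2 hmin)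

section NormedSpace

variable {E : Type*} [NormedAddCommGroup E] [NormedSpace ℝ E]

theorem norm_sub_smul_eq_mul_norm_inv_smul_sub {μ : ℝ} (hμ : 0 < μ) (v x : E) :
    ‖v - μ • x‖ = μ * ‖μ⁻¹ • v - x‖ := by
  have h : v - μ • x = μ • (μ⁻¹ • v - x) := by rw [smul_sub, smul_inv_smul₀ hμ.ne']
  rw [h, norm_smul, Real.norm_of_nonneg hμ.le]

theorem convexOn_norm_sub_smul_of_isMinOn {Z : Set E} (hZ : Convex ℝ Z) (v : E) {p : ℝ → E}
    (hpZ : ∀ μ, 0 < μ → p μ ∈ Z)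
    (hp : ∀ μ, 0 < μ → IsMinOn (fun x => ‖v - μ • x‖) Z (p μ)) :
    ConvexOn ℝ (Ioi 0) fun μ => ‖v - μ • p μ‖ := by
  refine ⟨convex_Ioi 0, fun μ₁ h₁ μ₂ h₂ a b ha hb hab => ?_⟩
  have hμ : 0 < a • μ₁ + b • μ₂ := convex_Ioi 0 h₁ h₂ ha hb hab
  set μ := a • μ₁ + b • μ₂
  have hζ : (a * μ₁ / μ) • p μ₁ + (b * μ₂ / μ) • p μ₂ ∈ Z := by
    refine hZ (hpZ μ₁ h₁) (hpZ μ₂ h₂) (div_nonneg (mul_nonneg ha h₁.le) hμ.le)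
      (div_nonneg (mul_nonneg hb h₂.le) hμ.le) ?_
    rw [← add_div, div_eq_one_iff_eq hμ.ne']
    rfl
  calc ‖v - μ • p μ‖ ≤ ‖v - μ • ((a * μ₁ / μ) • p μ₁ + (b * μ₂ / μ) • p μ₂)‖ := hp μ hμ hζ
    _ = ‖a • (v - μ₁ • p μ₁) + b • (v - μ₂ • p μ₂)‖ := by
      congr 1
      rw [smul_add, smul_smul, smul_smul, mul_div_cancel₀ _ hμ.ne', mul_div_cancel₀ _ hμ.ne']
      linear_combination (norm := module) (-hab) • v
    _ ≤ a • ‖v - μ₁ • p μ₁‖ + b • ‖v - μ₂ • p μ₂‖ :=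
      convexOn_univ_norm.2 trivial trivial ha hb hab

end NormedSpace

theorem hasDerivAt_half_norm_sub_smul_sq {E : Type*} [NormedAddCommGroup E]
    [InnerProductSpace ℝ E] (v x : E) (μ : ℝ) :
    HasDerivAt (fun μ : ℝ => 1 / 2 * ‖v - μ • x‖ ^ 2) (μ * ‖x‖ ^ 2 - ⟪v, x⟫) μ := by
  refine (((hasDerivAt_id' μ).smul_const x).const_sub v).norm_sq.const_mul (1 / 2)
    |>.congr_deriv ?_
  rw [one_smul, inner_neg_right, inner_sub_left, real_inner_smul_left, real_inner_self_eq_norm_sq]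
  ring

theorem strictConvexOn_univ_half_sub_sq (c : ℝ) :
    StrictConvexOn ℝ univ fun x : ℝ => 1 / 2 * (c - x) ^ 2 := by
  refine ⟨convex_univ, fun x _ y _ hxy a b ha hb hab => ?_⟩
  obtain rfl := eq_sub_of_add_eq' hab
  simp only [smul_eq_mul]
  nlinarith [mul_pos ha hb, sq_pos_of_ne_zero (sub_ne_zero.2 hxy)]

theorem psi_strictConvex_and_deriv_general (d : ℕ) (Z : Set (EuclideanSpace ℝ (Fin d)))
    (hZconv : Convex ℝ Z)
    (PZ : EuclideanSpace ℝ (Fin d) → EuclideanSpace ℝ (Fin d))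
    (hPZ : ∀ y, PZ y ∈ Z ∧ ∀ x ∈ Z, ‖y - PZ y‖ ≤ ‖y - x‖)
    (zt : EuclideanSpace ℝ (Fin d)) (lam : ℝ) (ψ : ℝ → ℝ)
    (hψ : ∀ μ, ψ μ = μ ^ 2 / 2 * (Metric.infDist (μ⁻¹ • zt) Z) ^ 2
      + (1 / 2) * (lam - μ) ^ 2) :
    StrictConvexOn ℝ (Set.Ioi (0 : ℝ)) ψ ∧
      ∀ μ : ℝ, 0 < μ → HasDerivAt ψ
        (μ * ‖PZ (μ⁻¹ • zt)‖ ^ 2 - ⟪zt, PZ (μ⁻¹ • zt)⟫ + μ - lam) μ := by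
  have hP_min : ∀ μ : ℝ, 0 < μ → IsMinOn (fun x => ‖zt - μ • x‖) Z (PZ (μ⁻¹ • zt)) :=
    fun μ hμ => isMinOn_iff.2 fun x hx => by
      simpa only [norm_sub_smul_eq_mul_norm_inv_smul_sub hμ] using
        mul_le_mul_of_nonneg_left ((hPZ _).2 x hx) hμ.le
  have hψ_eq : EqOn (fun μ => 1 / 2 * ‖zt - μ • PZ (μ⁻¹ • zt)‖ ^ 2 + 1 / 2 * (lam - μ) ^ 2) ψ
      (Ioi 0) := fun μ (hμ : 0 < μ) => by
    dsimp only
    rw [hψ, Metric.infDist_eq_dist_of_forall_dist_le (hPZ _).1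
      (by simpa only [dist_eq_norm] using (hPZ _).2), dist_eq_norm,
      norm_sub_smul_eq_mul_norm_inv_smul_sub hμ]
    ring
  have hdist_conv := convexOn_norm_sub_smul_of_isMinOn hZconv zt (fun μ _ => (hPZ _).1) hP_min
  have hconv : StrictConvexOn ℝ (Ioi 0) ψ :=
    (((hdist_conv.pow (fun _ _ => norm_nonneg _) 2).smul (by norm_num : (0 : ℝ) ≤ 1 / 2))
      |>.add_strictConvexOn
      ((strictConvexOn_univ_half_sub_sq lam).subset (subset_univ _) (convex_Ioi 0))).congr hψ_eq
  refine ⟨hconv, fun μ₀ hμ₀ => ?_⟩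
  refine hconv.convexOn.hasDerivAt_of_le_of_eq (by rwa [interior_Ioi])
    (g := fun μ => 1 / 2 * ‖zt - μ • PZ (μ₀⁻¹ • zt)‖ ^ 2 + 1 / 2 * (lam - μ) ^ 2)
    (fun μ hμ => ?_) (hψ_eq hμ₀).symm ?_
  · rw [← hψ_eq hμ]
    gcongr 1 / 2 * ?_ ^ 2 + _
    exact hP_min μ hμ (hPZ _).1
  · exact ((hasDerivAt_half_norm_sub_smul_sq zt _ μ₀).add
      ((((hasDerivAt_id' μ₀).const_sub lam).pow 2).const_mul (1 / 2))).congr_deriv (by ring)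

/-- The function `ψ(μ) = (μ²/2)·dist(z̃/μ, Z)² + (1/2)(λ − μ)²` is strictly convex on
`μ > 0`, with derivative `ψ′(μ) = μ‖P_Z(z̃/μ)‖² − z̃ᵀP_Z(z̃/μ) + μ − λ`. -/
theorem psi_strictConvex_and_deriv (d : ℕ) (Z : Set (EuclideanSpace ℝ (Fin d)))
    (hZconv : Convex ℝ Z) (hZcomp : IsCompact Z) (hZ0 : (0 : EuclideanSpace ℝ (Fin d)) ∈ Z)
    (PZ : EuclideanSpace ℝ (Fin d) → EuclideanSpace ℝ (Fin d))
    (hPZ : ∀ y, PZ y ∈ Z ∧ ∀ x ∈ Z, ‖y - PZ y‖ ≤ ‖y - x‖)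
    (zt : EuclideanSpace ℝ (Fin d)) (lam : ℝ) (ψ : ℝ → ℝ)
    (hψ : ∀ μ, ψ μ = μ ^ 2 / 2 * (Metric.infDist (μ⁻¹ • zt) Z) ^ 2
      + (1 / 2) * (lam - μ) ^ 2) :
    StrictConvexOn ℝ (Set.Ioi (0 : ℝ)) ψ ∧
      ∀ μ : ℝ, 0 < μ → HasDerivAt ψ
        (μ * ‖PZ (μ⁻¹ • zt)‖ ^ 2 - ⟪zt, PZ (μ⁻¹ • zt)⟫ + μ - lam) μ :=
  psi_strictConvex_and_deriv_general d Z hZconv PZ hPZ zt lam ψ hψ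
end

section
/- Let Z ⊆ ℝᵈ be convex compact with 0 ∈ Z. Then for every z̃ ∈ ℝᵈ and every α > 0, α·z̃ᵀP_Z(αz̃) ≥ ‖P_Z(αz̃)‖² ≥ 0, and as α → ∞, any limit point of P_Z(αz̃) belongs to argmax_{p∈Z} z̃ᵀp; in particular lim_{α→∞} z̃ᵀP_Z(αz̃) = σ_Z(z̃). -/
open scoped RealInnerProductSpace
open Filter Topology

/-!
Write `p_α` for the projection of `α z` onto `Z`. The variational inequality
`⟪α z - p_α, q - p_α⟫ ≤ 0` for `q ∈ Z` gives, at `q = 0`, the bound `‖p_α‖² ≤ α ⟪z, p_α⟫`,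
and for general `q` it gives `⟪z, q⟫ ≤ ⟪z, p_α⟫ + 2R²/α` when `Z` lies in the ball of radius `R`.
Hence `⟪z, p_α⟫` is squeezed between `σ_Z(z) - 2R²/α` and `σ_Z(z)`; every cluster point `p`
of `p_α` lies in the closed set `Z` and satisfies `⟪z, p⟫ = σ_Z(z)`.
-/

theorem MapClusterPt.eq_of_tendsto {α X : Type*} [TopologicalSpace X] [T2Space X]
    {F : Filter α} {u : α → X} {x y : X} (hx : MapClusterPt x F u) (hu : Tendsto u F (𝓝 y)) :
    x = y :=
  eq_of_nhds_neBot (hx.clusterPt.mono hu)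

variable {E : Type*} [NormedAddCommGroup E] [InnerProductSpace ℝ E]

def IsNearestPoint (K : Set E) (y p : E) : Prop :=
  p ∈ K ∧ ∀ x ∈ K, ‖y - p‖ ≤ ‖y - x‖

namespace IsNearestPoint

variable {K : Set E} {y p : E}

theorem inner_sub_nonpos (hK : Convex ℝ K) (h : IsNearestPoint K y p) {x : E} (hx : x ∈ K) :
    ⟪y - p, x - p⟫ ≤ 0 := by
  have : Nonempty K := ⟨⟨p, h.1⟩⟩
  have hinf : ‖y - p‖ = ⨅ w : K, ‖y - w‖ :=
    le_antisymm (le_ciInf fun w => h.2 w w.2)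
      (ciInf_le (f := fun w : K => ‖y - w‖) ⟨0, Set.forall_mem_range.2 fun _ => norm_nonneg _⟩
        ⟨p, h.1⟩)
  exact (norm_eq_iInf_iff_real_inner_le_zero hK h.1).1 hinf x hx

theorem norm_sq_le_inner (hK : Convex ℝ K) (hK0 : (0 : E) ∈ K) (h : IsNearestPoint K y p) :
    ‖p‖ ^ 2 ≤ ⟪y, p⟫ := by
  have := h.inner_sub_nonpos hK hK0
  rw [zero_sub, inner_neg_right, inner_sub_left, real_inner_self_eq_norm_sq] at this
  linarith

theorem inner_le_inner_add_div {R α : ℝ} {z q : E} (hK : Convex ℝ K) (hR : ∀ x ∈ K, ‖x‖ ≤ R)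
    (hα : 0 < α) (h : IsNearestPoint K (α • z) p) (hq : q ∈ K) :
    ⟪z, q⟫ ≤ ⟪z, p⟫ + 2 * R ^ 2 / α := by
  have hvar : α * ⟪z, q - p⟫ ≤ ⟪p, q - p⟫ := by
    have := h.inner_sub_nonpos hK hq
    rw [inner_sub_left, real_inner_smul_left] at this
    linarith
  have hbound : ⟪p, q - p⟫ ≤ 2 * R ^ 2 :=
    calc ⟪p, q - p⟫ ≤ ‖p‖ * ‖q - p‖ := real_inner_le_norm _ _
      _ ≤ R * (R + R) :=
          mul_le_mul (hR p h.1) ((norm_sub_le _ _).trans (add_le_add (hR q hq) (hR p h.1)))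
            (norm_nonneg _) ((norm_nonneg _).trans (hR p h.1))
      _ = 2 * R ^ 2 := by ring
  rw [inner_sub_right] at hvar
  rw [← sub_le_iff_le_add', le_div_iff₀ hα]
  linarith

end IsNearestPoint

section Ray

variable {K : Set E} {P : E → E} (z : E)

theorem tendsto_inner_nearestPoint_smul (hK : Convex ℝ K) (hKc : IsCompact K)
    (hP : ∀ y, IsNearestPoint K y (P y)) :
    Tendsto (fun α : ℝ => ⟪z, P (α • z)⟫) atTop (𝓝 (sSup ((fun p => ⟪z, p⟫) '' K))) := by
  obtain ⟨R, hR⟩ := hKc.isBounded.exists_norm_le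
  obtain ⟨q, hq, hsup, hmax⟩ := hKc.exists_sSup_image_eq_and_ge ⟨P 0, (hP 0).1⟩
    (f := fun p => ⟪z, p⟫) (continuous_const.inner continuous_id).continuousOn
  rw [hsup]
  have hlower : Tendsto (fun α : ℝ => ⟪z, q⟫ - 2 * R ^ 2 / α) atTop (𝓝 ⟪z, q⟫) := by
    simpa using tendsto_const_nhds.sub
      ((tendsto_const_nhds (x := 2 * R ^ 2)).div_atTop (tendsto_id (x := atTop (α := ℝ))))
  refine tendsto_of_tendsto_of_tendsto_of_le_of_le' hlower tendsto_const_nhds ?_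
    (Eventually.of_forall fun α => hmax _ (hP _).1)
  filter_upwards [eventually_gt_atTop 0] with α hα
  linarith [(hP (α • z)).inner_le_inner_add_div hK hR hα hq]

theorem mem_and_isMaxOn_inner_of_mapClusterPt_nearestPoint_smul (hK : Convex ℝ K)
    (hKc : IsCompact K) (hP : ∀ y, IsNearestPoint K y (P y)) {p : E}
    (hp : MapClusterPt p atTop (fun α : ℝ => P (α • z))) :
    p ∈ K ∧ IsMaxOn (fun q => ⟪z, q⟫) K p := by
  have hpK : p ∈ K :=
    hKc.isClosed.mem_of_mapClusterPt hp (Eventually.of_forall fun α => (hP _).1)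
  have hsup : ⟪z, p⟫ = sSup ((fun p => ⟪z, p⟫) '' K) :=
    (hp.continuousAt_comp (continuous_const.inner continuous_id).continuousAt).eq_of_tendsto
      (tendsto_inner_nearestPoint_smul z hK hKc hP)
  refine ⟨hpK, isMaxOn_iff.2 fun q hq => hsup ▸ le_csSup ?_ ⟨q, hq, rfl⟩⟩
  exact (hKc.image (continuous_const.inner continuous_id)).bddAbove

end Ray

/-- For a convex compact `Z ∋ 0`: `α·z̃ᵀP_Z(αz̃) ≥ ‖P_Z(αz̃)‖² ≥ 0` for every `α > 0`;
any limit point of `P_Z(αz̃)` as `α → ∞` maximizes `p ↦ z̃ᵀp` over `Z`; and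
`z̃ᵀP_Z(αz̃) → σ_Z(z̃)` as `α → ∞`. -/
theorem projection_ray_limits (d : ℕ) (Z : Set (EuclideanSpace ℝ (Fin d)))
    (hZconv : Convex ℝ Z) (hZcomp : IsCompact Z) (hZ0 : (0 : EuclideanSpace ℝ (Fin d)) ∈ Z)
    (PZ : EuclideanSpace ℝ (Fin d) → EuclideanSpace ℝ (Fin d))
    (hPZ : ∀ y, PZ y ∈ Z ∧ ∀ x ∈ Z, ‖y - PZ y‖ ≤ ‖y - x‖)
    (zt : EuclideanSpace ℝ (Fin d)) :
    (∀ α : ℝ, 0 < α →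
      0 ≤ ‖PZ (α • zt)‖ ^ 2 ∧ ‖PZ (α • zt)‖ ^ 2 ≤ α * ⟪zt, PZ (α • zt)⟫) ∧
    (∀ p : EuclideanSpace ℝ (Fin d),
      MapClusterPt p Filter.atTop (fun α : ℝ => PZ (α • zt)) →
        p ∈ Z ∧ ∀ q ∈ Z, ⟪zt, q⟫ ≤ ⟪zt, p⟫) ∧
    Filter.Tendsto (fun α : ℝ => (⟪zt, PZ (α • zt)⟫ : ℝ)) Filter.atTop
      (nhds (sSup ((fun p => (⟪zt, p⟫ : ℝ)) '' Z))) := by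
  refine ⟨fun α _ => ⟨sq_nonneg _, ?_⟩,
    fun p hp => mem_and_isMaxOn_inner_of_mapClusterPt_nearestPoint_smul zt hZconv hZcomp hPZ hp,
    tendsto_inner_nearestPoint_smul zt hZconv hZcomp hPZ⟩
  simpa only [real_inner_smul_left] using
    IsNearestPoint.norm_sq_le_inner hZconv hZ0 (hPZ (α • zt))
end

section
/- For the trust-region pessimization problem, letting g(z) = zᵀQz + 2rᵀz + s with Q symmetric positive semidefinite, one has sup over ‖z‖ ≤ 1 of g(z) equal to sup over ‖z‖ ≤ 1 of zᵀ(Q − λ_max(Q)·I)z + 2rᵀz + s + λ_max(Q), and the function z ↦ zᵀ(Q − λ_max(Q)I)z + 2rᵀz + s + λ_max(Q) is concave. -/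
/-!
On the unit ball the penalty `lmax * (1 - ‖z‖ ^ 2)` is nonnegative, so the penalized objective
dominates `g`, and the two agree on the unit sphere. Conversely, if `u` is a unit vector with
`⟪u, T u⟫ = lmax`, the penalized objective is affine along every line in direction `u`; such a line
through a point of the ball meets the sphere on both sides of it, and on one side the affine
function does not decrease. Concavity holds because `⟪z, T z⟫ - lmax * ‖z‖ ^ 2` is a nonpositive
quadratic form.
-/

open scoped RealInnerProductSpace

section

variable {E : Type*} [NormedAddCommGroup E] [InnerProductSpace ℝ E]

theorem inner_add_smul_map_add_smul (T : E →ₗ[ℝ] E) (z u : E) (t : ℝ) :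
    ⟪z + t • u, T (z + t • u)⟫
      = ⟪z, T z⟫ + t * (⟪z, T u⟫ + ⟪u, T z⟫) + t ^ 2 * ⟪u, T u⟫ := by
  simp only [map_add, map_smul, inner_add_left, inner_add_right, real_inner_smul_left,
    real_inner_smul_right]
  ring

theorem concaveOn_inner_map_self (T : E →ₗ[ℝ] E) (hT : ∀ z, ⟪z, T z⟫ ≤ 0) :
    ConcaveOn ℝ Set.univ fun z => ⟪z, T z⟫ := by
  refine ⟨convex_univ, fun x _ y _ a b ha hb hab => ?_⟩
  obtain rfl : b = 1 - a := eq_sub_of_add_eq' hab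
  have hx := inner_add_smul_map_add_smul T y (x - y) 1
  rw [one_smul, add_sub_cancel] at hx
  have hseg : a • x + (1 - a) • y = y + a • (x - y) := by
    rw [sub_smul, one_smul, smul_sub]; abel
  simp only [smul_eq_mul]
  rw [hseg, inner_add_smul_map_add_smul]
  nlinarith [mul_nonneg ha hb, hT (x - y)]

theorem concaveOn_inner_map_self_sub_mul_norm_sq (T : E →ₗ[ℝ] E) {c : ℝ}
    (hT : ∀ z, ⟪z, T z⟫ ≤ c * ‖z‖ ^ 2) :
    ConcaveOn ℝ Set.univ fun z => ⟪z, T z⟫ - c * ‖z‖ ^ 2 := by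
  have key : ∀ z, ⟪z, (T - c • LinearMap.id : E →ₗ[ℝ] E) z⟫ = ⟪z, T z⟫ - c * ‖z‖ ^ 2 :=
    fun z => by simp [inner_sub_right, real_inner_smul_right]
  refine (concaveOn_inner_map_self _ fun z => ?_).congr fun z _ => key z
  rw [key, sub_nonpos]
  exact hT z

theorem inner_map_self_sub_mul_norm_sq_add_smul (T : E →ₗ[ℝ] E) {c : ℝ} {u : E}
    (hu : ⟪u, T u⟫ = c * ‖u‖ ^ 2) (z : E) (t : ℝ) :
    ⟪z + t • u, T (z + t • u)⟫ - c * ‖z + t • u‖ ^ 2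
      = ⟪z, T z⟫ - c * ‖z‖ ^ 2 + t * (⟪z, T u⟫ + ⟪u, T z⟫ - 2 * c * ⟪z, u⟫) := by
  rw [inner_add_smul_map_add_smul, hu, norm_add_sq_real, norm_smul, real_inner_smul_right,
    mul_pow, Real.norm_eq_abs, sq_abs]
  ring

theorem exists_mul_nonneg_norm_add_smul_eq_one {z u : E} (hz : ‖z‖ ≤ 1) (hu : ‖u‖ = 1) (c : ℝ) :
    ∃ t : ℝ, 0 ≤ t * c ∧ ‖z + t • u‖ = 1 := by
  set b := ⟪z, u⟫
  -- the roots `-b ± d` of `t ^ 2 + 2 b t + ‖z‖ ^ 2 - 1` have opposite signs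
  set d := √(b ^ 2 + 1 - ‖z‖ ^ 2)
  have hd : d ^ 2 = b ^ 2 + 1 - ‖z‖ ^ 2 :=
    Real.sq_sqrt (by nlinarith [norm_nonneg z, sq_nonneg b])
  have hbd : |b| ≤ d := Real.abs_le_sqrt (by nlinarith [norm_nonneg z])
  have hroot : ∀ t, t ^ 2 + 2 * b * t + ‖z‖ ^ 2 = 1 → ‖z + t • u‖ = 1 := fun t ht => by
    have : ‖z + t • u‖ ^ 2 = 1 := by
      rw [norm_add_sq_real, norm_smul, real_inner_smul_right, mul_pow, Real.norm_eq_abs, sq_abs,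
        hu]
      linear_combination ht
    simpa using (pow_eq_one_iff_of_nonneg (norm_nonneg _) two_ne_zero).1 this
  rcases le_total 0 c with hc | hc
  · exact ⟨-b + d, mul_nonneg (by linarith [le_abs_self b]) hc, hroot _ (by linear_combination hd)⟩
  · exact ⟨-b - d, mul_nonneg_of_nonpos_of_nonpos (by linarith [neg_abs_le b]) hc,
      hroot _ (by linear_combination hd)⟩

end

theorem trust_region_concave_reformulation_general (K : ℕ)
    (T : EuclideanSpace ℝ (Fin K) →L[ℝ] EuclideanSpace ℝ (Fin K))
    (hTpsd : ∀ z, 0 ≤ (⟪z, T z⟫ : ℝ))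
    (r : EuclideanSpace ℝ (Fin K)) (s : ℝ)
    -- λ_max is the largest eigenvalue of T
    (lmax : ℝ)
    (hl1 : ∀ z : EuclideanSpace ℝ (Fin K), (⟪z, T z⟫ : ℝ) ≤ lmax * ‖z‖ ^ 2)
    (hl2 : ∃ z : EuclideanSpace ℝ (Fin K), ‖z‖ = 1 ∧ (⟪z, T z⟫ : ℝ) = lmax) :
    sSup ((fun z : EuclideanSpace ℝ (Fin K) => ⟪z, T z⟫ + 2 * ⟪r, z⟫ + s) ''
        {z | ‖z‖ ≤ 1})
      = sSup ((fun z : EuclideanSpace ℝ (Fin K) =>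
          (⟪z, T z⟫ - lmax * ‖z‖ ^ 2) + 2 * ⟪r, z⟫ + s + lmax) '' {z | ‖z‖ ≤ 1}) ∧
    ConcaveOn ℝ Set.univ (fun z : EuclideanSpace ℝ (Fin K) =>
      (⟪z, T z⟫ - lmax * ‖z‖ ^ 2) + 2 * ⟪r, z⟫ + s + lmax) := by
  obtain ⟨u, hu, hTu⟩ := hl2
  have hlmax : 0 ≤ lmax := hTu ▸ hTpsd u
  refine ⟨csSup_eq_csSup_of_forall_exists_le ?_ ?_, ?_⟩
  · rintro _ ⟨z, hz, rfl⟩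
    refine ⟨_, ⟨z, hz, rfl⟩, ?_⟩
    have : lmax * ‖z‖ ^ 2 ≤ lmax := mul_le_of_le_one_right hlmax (pow_le_one₀ (norm_nonneg z) hz)
    dsimp only
    linarith
  · -- move `z` along `u` to the sphere, in the direction in which the penalized objective grows
    rintro _ ⟨z, hz, rfl⟩
    obtain ⟨t, ht, hzt⟩ := exists_mul_nonneg_norm_add_smul_eq_one hz hu
      (⟪z, T u⟫ + ⟪u, T z⟫ - 2 * lmax * ⟪z, u⟫ + 2 * ⟪r, u⟫)
    refine ⟨_, ⟨z + t • u, hzt.le, rfl⟩, ?_⟩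
    have hline := inner_map_self_sub_mul_norm_sq_add_smul T.toLinearMap (c := lmax)
      (by rw [hu, one_pow, mul_one, ContinuousLinearMap.coe_coe, hTu]) z t
    simp only [ContinuousLinearMap.coe_coe, hzt] at hline
    simp only [inner_add_right, real_inner_smul_right]
    linear_combination ht - hline
  · exact (((concaveOn_inner_map_self_sub_mul_norm_sq T.toLinearMap hl1).add
      (((innerₛₗ ℝ r).concaveOn convex_univ).smul zero_le_two)).add_const s).add_const lmax

/-- Trust-region reformulation: for `g(z) = zᵀQz + 2rᵀz + s` with `Q` symmetric PSD,
`sup_{‖z‖≤1} g(z) = sup_{‖z‖≤1} zᵀ(Q − λ_max(Q)I)z + 2rᵀz + s + λ_max(Q)`, and the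
latter objective is concave. -/
theorem trust_region_concave_reformulation (K : ℕ)
    (T : EuclideanSpace ℝ (Fin K) →L[ℝ] EuclideanSpace ℝ (Fin K))
    (hTsa : IsSelfAdjoint T)
    (hTpsd : ∀ z, 0 ≤ (⟪z, T z⟫ : ℝ))
    (r : EuclideanSpace ℝ (Fin K)) (s : ℝ)
    -- λ_max is the largest eigenvalue of T
    (lmax : ℝ)
    (hl1 : ∀ z : EuclideanSpace ℝ (Fin K), (⟪z, T z⟫ : ℝ) ≤ lmax * ‖z‖ ^ 2)
    (hl2 : ∃ z : EuclideanSpace ℝ (Fin K), ‖z‖ = 1 ∧ (⟪z, T z⟫ : ℝ) = lmax) :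
    sSup ((fun z : EuclideanSpace ℝ (Fin K) => ⟪z, T z⟫ + 2 * ⟪r, z⟫ + s) ''
        {z | ‖z‖ ≤ 1})
      = sSup ((fun z : EuclideanSpace ℝ (Fin K) =>
          (⟪z, T z⟫ - lmax * ‖z‖ ^ 2) + 2 * ⟪r, z⟫ + s + lmax) '' {z | ‖z‖ ≤ 1}) ∧
    ConcaveOn ℝ Set.univ (fun z : EuclideanSpace ℝ (Fin K) =>
      (⟪z, T z⟫ - lmax * ‖z‖ ^ 2) + 2 * ⟪r, z⟫ + s + lmax) :=
  trust_region_concave_reformulation_general K T hTpsd r s lmax hl1 hl2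
end
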